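/- arXiv:1808.07921 — 5 statements merged into one kernel-verified Lean document; each statement's English description precedes it below -/
import Mathlib

section
/- (Switch from SC to AC is safe.) Let an RTA instance be given with T_* concatenation-closed and property (P3) holding. Then for every state s ∈ φ_safer and every state s' ∈ Reach(T_*, s, Δ), it holds that Reach(T_*, s', Δ) ⊆ φ_safe; in particular Reach(T_*, s, Δ) ⊆ φ_safe. -/
/-- The set of states reachable from `s` within time `t` along trajectories in `T`. -/
def Reach {S : Type*} (T : Set (ℝ → S)) (s : S) (t : ℝ) : Set S :=
  {x | ∃ τ ∈ T, τ 0 = s ∧ ∃ u : ℝ, 0 ≤ u ∧ u ≤ t ∧ τ u = x}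

/-- The set of states reachable from a set `ψ` of states within time `t`. -/
def ReachSet {S : Type*} (T : Set (ℝ → S)) (ψ : Set S) (t : ℝ) : Set S :=
  ⋃ s ∈ ψ, Reach T s t

/-- `T` is closed under concatenation of trajectories. -/
def ConcatClosed {S : Type*} (T : Set (ℝ → S)) : Prop :=
  ∀ τ ∈ T, ∀ σ ∈ T, ∀ c : ℝ, 0 ≤ c → σ 0 = τ c →
    (fun u : ℝ => if u ≤ c then τ u else σ (u - c)) ∈ T

theorem switch_sc_to_ac_safe {S : Type*}
    (Tsc Tstar : Set (ℝ → S)) (hsub : Tsc ⊆ Tstar)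
    (Δ : ℝ) (hΔ : 0 < Δ) (φsafe φsafer : Set S)
    (hconcat : ConcatClosed Tstar)
    (hP3 : ReachSet Tstar φsafer (2 * Δ) ⊆ φsafe) :
    ∀ s ∈ φsafer,
      (∀ s' ∈ Reach Tstar s Δ, Reach Tstar s' Δ ⊆ φsafe) ∧
      Reach Tstar s Δ ⊆ φsafe := by
  intro s hs
  have hmem : ∀ x, x ∈ Reach Tstar s (2 * Δ) → x ∈ φsafe := by
    intro x hx
    exact hP3 (Set.mem_biUnion hs hx)
  constructor
  · rintro s' ⟨τ, hτ, hτ0, u, hu0, huΔ, hτu⟩ x ⟨σ, hσ, hσ0, v, hv0, hvΔ, hσv⟩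
    apply hmem
    refine ⟨_, hconcat τ hτ σ hσ u hu0 (hσ0.trans hτu.symm), ?_, u + v, by linarith,
      by linarith, ?_⟩
    · simp [if_pos hu0, hτ0]
    · by_cases h : u + v ≤ u
      · have hv : v = 0 := le_antisymm (by linarith) hv0
        simp [h, hτu, ← hσv, hv, hσ0]
      · simpa [h] using hσv
  · rintro x ⟨τ, hτ, hτ0, u, hu0, huΔ, hτu⟩
    exact hmem x ⟨τ, hτ, hτ0, u, hu0, by linarith, hτu⟩
end

section
/- (Theorem 3.1, Runtime Assurance.) Let an RTA instance be given with T_SC ⊆ T_*, T_* concatenation-closed, and properties (P2a) and (P3) holding. Let (m, s) be a sampled execution of the RTA instance. If the invariant Φ_Inv(m 0, s 0) holds, then Φ_Inv(m k, s k) holds for every k : ℕ. -/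
/-- The RTA invariant Φ_Inv: in SC mode (`false`) the state is safe, in AC mode (`true`)
the state remains safe for at least Δ time under any controller. -/
def PhiInv {S : Type*} (Tstar : Set (ℝ → S)) (Δ : ℝ) (φsafe : Set S)
    (mode : Bool) (s : S) : Prop :=
  (mode = false ∧ s ∈ φsafe) ∨ (mode = true ∧ Reach Tstar s Δ ⊆ φsafe)

lemma reach_trans {S : Type*} {T : Set (ℝ → S)} (hT : ConcatClosed T)
    {a b : S} {t₁ t₂ : ℝ} (hb : b ∈ Reach T a t₁) :
    Reach T b t₂ ⊆ Reach T a (t₁ + t₂) := by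
  obtain ⟨τ, hτ, hτ0, u, hu0, hut, hτu⟩ := hb
  rintro x ⟨σ, hσ, hσ0, v, hv0, hvt, hσv⟩
  refine ⟨_, hT τ hτ σ hσ u hu0 (by rw [hσ0, hτu]), ?_, u + v, by linarith, by linarith, ?_⟩
  · simp [hu0, hτ0]
  · by_cases h : u + v ≤ u
    · have hv : v = 0 := le_antisymm (by linarith) hv0
      simp only [h, if_pos]
      rw [hv, add_zero, hτu, ← hσ0, ← hv, hσv]
    · simp only [h, if_neg, not_false_iff]
      simpa using hσv

/-- Theorem 3.1 (Runtime Assurance): the invariant Φ_Inv is preserved along any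
sampled execution of a well-formed RTA module. -/
theorem runtime_assurance {S : Type*}
    (Tsc Tstar : Set (ℝ → S)) (hsub : Tsc ⊆ Tstar)
    (Δ : ℝ) (hΔ : 0 < Δ) (φsafe φsafer : Set S)
    (hconcat : ConcatClosed Tstar)
    (hP2a : ∀ t : ℝ, 0 ≤ t → ReachSet Tsc φsafe t ⊆ φsafe)
    (hP3 : ReachSet Tstar φsafer (2 * Δ) ⊆ φsafe)
    (m : ℕ → Bool) (s : ℕ → S)
    (hmode : ∀ k : ℕ, m (k + 1) = true ↔
      ((m k = false ∧ s k ∈ φsafer) ∨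
       (m k = true ∧ Reach Tstar (s k) (2 * Δ) ⊆ φsafe)))
    (hstep : ∀ k : ℕ,
      (m (k + 1) = false → s (k + 1) ∈ Reach Tsc (s k) Δ) ∧
      (m (k + 1) = true → s (k + 1) ∈ Reach Tstar (s k) Δ))
    (hinit : PhiInv Tstar Δ φsafe (m 0) (s 0)) :
    ∀ k : ℕ, PhiInv Tstar Δ φsafe (m k) (s k) := by
  have hreach_sub : ∀ k, Reach Tsc (s k) Δ ⊆ Reach Tstar (s k) Δ := by
    rintro k x ⟨τ, hτ, h⟩; exact ⟨τ, hsub hτ, h⟩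
  intro k
  induction k with
  | zero => exact hinit
  | succ k ih =>
    cases hm : m (k + 1) with
    | false =>
      left
      refine ⟨rfl, ?_⟩
      have hs := (hstep k).1 hm
      rcases ih with ⟨_, hsafe⟩ | ⟨_, hsafe⟩
      · exact hP2a Δ hΔ.le (Set.mem_biUnion hsafe hs)
      · exact hsafe (hreach_sub k hs)
    | true =>
      right
      refine ⟨rfl, ?_⟩
      have hs := (hstep k).2 hm
      have h2 : Reach Tstar (s k) (2 * Δ) ⊆ φsafe := by
        rcases (hmode k).1 hm with ⟨_, hsr⟩ | ⟨_, h⟩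
        · exact fun x hx => hP3 (Set.mem_biUnion hsr hx)
        · exact h
      intro x hx
      apply h2
      have := reach_trans hconcat hs hx
      rwa [show Δ + Δ = 2 * Δ by ring] at this
end

section
/- (Safety of RTA-protected executions at sample points.) Let an RTA instance be given with T_SC ⊆ T_*, T_* total and concatenation-closed, and properties (P2a) and (P3) holding. Let (m, s) be a sampled execution of the RTA instance such that the invariant Φ_Inv(m 0, s 0) holds. Then s k ∈ φ_safe for every k : ℕ. -/
/-- Every state is the initial state of some trajectory in `T`. -/
def TotalTraj {S : Type*} (T : Set (ℝ → S)) : Prop :=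
  ∀ s : S, ∃ τ ∈ T, τ 0 = s

/-- Safety of RTA-protected executions at sample points. -/
theorem rta_safe_at_samples {S : Type*}
    (Tsc Tstar : Set (ℝ → S)) (hsub : Tsc ⊆ Tstar)
    (Δ : ℝ) (hΔ : 0 < Δ) (φsafe φsafer : Set S)
    (htot : TotalTraj Tstar)
    (hconcat : ConcatClosed Tstar)
    (hP2a : ∀ t : ℝ, 0 ≤ t → ReachSet Tsc φsafe t ⊆ φsafe)
    (hP3 : ReachSet Tstar φsafer (2 * Δ) ⊆ φsafe)
    (m : ℕ → Bool) (s : ℕ → S)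
    (hmode : ∀ k : ℕ, m (k + 1) = true ↔
      ((m k = false ∧ s k ∈ φsafer) ∨
       (m k = true ∧ Reach Tstar (s k) (2 * Δ) ⊆ φsafe)))
    (hstep : ∀ k : ℕ,
      (m (k + 1) = false → s (k + 1) ∈ Reach Tsc (s k) Δ) ∧
      (m (k + 1) = true → s (k + 1) ∈ Reach Tstar (s k) Δ))
    (hinit : PhiInv Tstar Δ φsafe (m 0) (s 0)) :
    ∀ k : ℕ, s k ∈ φsafe := by
  -- self-reachability
  have hself : ∀ (x : S) (t : ℝ), 0 ≤ t → x ∈ Reach Tstar x t := by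
    intro x t ht
    obtain ⟨τ, hτ, hτ0⟩ := htot x
    exact ⟨τ, hτ, hτ0, 0, le_refl 0, ht, hτ0⟩
  have hsafe_of_inv : ∀ k : ℕ, PhiInv Tstar Δ φsafe (m k) (s k) → s k ∈ φsafe := by
    intro k h
    rcases h with ⟨_, h⟩ | ⟨_, h⟩
    · exact h
    · exact h (hself (s k) Δ hΔ.le)
  -- invariant is maintained
  have hinv : ∀ k : ℕ, PhiInv Tstar Δ φsafe (m k) (s k) := by
    intro k
    induction k with
    | zero => exact hinit
    | succ k ih =>
      have hk : s k ∈ φsafe := hsafe_of_inv k ih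
      cases hm1 : m (k + 1) with
      | false =>
        left
        refine ⟨rfl, ?_⟩
        have hr : s (k + 1) ∈ Reach Tsc (s k) Δ := (hstep k).1 hm1
        exact hP2a Δ hΔ.le (Set.mem_biUnion hk hr)
      | true =>
        right
        refine ⟨rfl, ?_⟩
        -- from the mode rule, Reach Tstar (s k) (2Δ) ⊆ φsafe
        have h2 : Reach Tstar (s k) (2 * Δ) ⊆ φsafe := by
          rcases (hmode k).mp hm1 with ⟨_, hsr⟩ | ⟨_, h⟩
          · intro x hx; exact hP3 (Set.mem_biUnion hsr hx)
          · exact h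
        have hr : s (k + 1) ∈ Reach Tstar (s k) Δ := (hstep k).2 hm1
        obtain ⟨τ, hτ, hτ0, u, hu0, huΔ, hτu⟩ := hr
        intro x hx
        obtain ⟨σ, hσ, hσ0, v, hv0, hvΔ, hσv⟩ := hx
        have hcat := hconcat τ hτ σ hσ u hu0 (by rw [hσ0, hτu])
        apply h2
        refine ⟨_, hcat, ?_, u + v, by linarith, by linarith, ?_⟩
        · simp [hu0]; exact hτ0
        · by_cases hc : u + v ≤ u
          · have hv : v = 0 := le_antisymm (by linarith) hv0
            subst hv
            rw [add_zero, if_pos le_rfl, hτu, ← hσ0]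
            exact hσv
          · simp only [hc, if_false, add_sub_cancel_left, hσv]
  exact fun k => hsafe_of_inv k (hinv k)
end

section
/- (Continuous-time safety of RTA-protected executions.) Let an RTA instance be given with T_SC ⊆ T_*, T_* concatenation-closed, and properties (P2a) and (P3) holding. Let (x, m, τ) be a switched trajectory of the RTA instance such that the invariant Φ_Inv(m 0, x 0) holds. Then x t ∈ φ_safe for every time t ≥ 0. -/
/-- Continuous-time safety of RTA-protected executions. -/
theorem rta_safe_continuous {S : Type*}
    (Tsc Tstar : Set (ℝ → S)) (hsub : Tsc ⊆ Tstar)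
    (Δ : ℝ) (hΔ : 0 < Δ) (φsafe φsafer : Set S)
    (hconcat : ConcatClosed Tstar)
    (hP2a : ∀ t : ℝ, 0 ≤ t → ReachSet Tsc φsafe t ⊆ φsafe)
    (hP3 : ReachSet Tstar φsafer (2 * Δ) ⊆ φsafe)
    (x : ℝ → S) (m : ℕ → Bool) (τ : ℕ → (ℝ → S))
    (hτ0 : ∀ k : ℕ, τ k 0 = x (k * Δ))
    (hx : ∀ k : ℕ, ∀ u : ℝ, 0 ≤ u → u ≤ Δ → x (k * Δ + u) = τ k u)
    (hτmem : ∀ k : ℕ,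
      (m (k + 1) = false → τ k ∈ Tsc) ∧ (m (k + 1) = true → τ k ∈ Tstar))
    (hmode : ∀ k : ℕ, m (k + 1) = true ↔
      ((m k = false ∧ x (k * Δ) ∈ φsafer) ∨
       (m k = true ∧ Reach Tstar (x (k * Δ)) (2 * Δ) ⊆ φsafe)))
    (hinit : PhiInv Tstar Δ φsafe (m 0) (x 0)) :
    ∀ t : ℝ, 0 ≤ t → x t ∈ φsafe := by

  have hτstar : ∀ k, τ k ∈ Tstar := by
    intro k
    cases h : m (k + 1) with
    | false => exact hsub ((hτmem k).1 h)
    | true => exact (hτmem k).2 h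
  have step : ∀ k : ℕ, PhiInv Tstar Δ φsafe (m k) (x (k * Δ)) →
      (∀ u : ℝ, 0 ≤ u → u ≤ Δ → x (k * Δ + u) ∈ φsafe) ∧
      PhiInv Tstar Δ φsafe (m (k + 1)) (x ((k + 1 : ℕ) * Δ)) := by
    intro k hinv
    have hxk : ∀ u : ℝ, 0 ≤ u → u ≤ Δ → x (↑k * Δ + u) = τ k u := hx k
    have hx0 : τ k 0 = x (↑k * Δ) := hτ0 k
    have hkΔ1 : ((k + 1 : ℕ) : ℝ) * Δ = ↑k * Δ + Δ := by push_cast; ring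
    cases hm1 : m (k + 1) with
    | false =>
      have hsc := (hτmem k).1 hm1
      have hsafe0 : x (↑k * Δ) ∈ φsafe := by
        rcases hinv with ⟨_, hs⟩ | ⟨_, hR⟩
        · exact hs
        · exact hR ⟨τ k, hτstar k, hx0, 0, le_refl _, hΔ.le, hx0⟩
      have hint : ∀ u : ℝ, 0 ≤ u → u ≤ Δ → x (↑k * Δ + u) ∈ φsafe := by
        intro u hu huΔ
        rw [hxk u hu huΔ]
        exact hP2a Δ hΔ.le (Set.mem_biUnion hsafe0 ⟨τ k, hsc, hx0, u, hu, huΔ, rfl⟩)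
      refine ⟨hint, Or.inl ⟨rfl, ?_⟩⟩
      rw [hkΔ1]
      exact hint Δ hΔ.le le_rfl
    | true =>
      have hst := (hτmem k).2 hm1
      have hR2 : Reach Tstar (x (↑k * Δ)) (2 * Δ) ⊆ φsafe := by
        rcases (hmode k).1 hm1 with ⟨_, hsafer⟩ | ⟨_, hR⟩
        · intro s hs
          exact hP3 (Set.mem_biUnion hsafer hs)
        · exact hR
      have hint : ∀ u : ℝ, 0 ≤ u → u ≤ Δ → x (↑k * Δ + u) ∈ φsafe := by
        intro u hu huΔ
        rw [hxk u hu huΔ]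
        exact hR2 ⟨τ k, hst, hx0, u, hu, by linarith, rfl⟩
      refine ⟨hint, Or.inr ⟨rfl, ?_⟩⟩
      rintro s ⟨σ, hσ, hσ0, u, hu, huΔ, rfl⟩
      have hxk1 : x ((↑(k + 1) : ℝ) * Δ) = τ k Δ := by
        rw [hkΔ1]; exact hxk Δ hΔ.le le_rfl
      have hσ0' : σ 0 = τ k Δ := by
        rw [hσ0]
        push_cast at hxk1 ⊢
        exact hxk1
      have hρ := hconcat (τ k) hst σ hσ Δ hΔ.le hσ0'
      refine hR2 ⟨_, hρ, ?_, Δ + u, by linarith, by linarith, ?_⟩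
      · simp only [if_pos hΔ.le]
        exact hx0
      · rcases eq_or_lt_of_le hu with h0 | h0
        · simp only [← h0, add_zero, if_pos le_rfl]
          exact hσ0'.symm
        · have hnot : ¬ (Δ + u ≤ Δ) := by linarith
          simp only [hnot, if_false]
          ring_nf
  have inv : ∀ k : ℕ, PhiInv Tstar Δ φsafe (m k) (x (k * Δ)) := by
    intro k
    induction k with
    | zero => simpa using hinit
    | succ n ih => exact (step n ih).2
  intro t ht
  set k : ℕ := ⌊t / Δ⌋.toNat with hk
  have hdiv : 0 ≤ t / Δ := div_nonneg ht hΔ.le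
  have hkr : (k : ℝ) = ⌊t / Δ⌋ := by
    rw [hk]
    exact_mod_cast Int.toNat_of_nonneg (Int.floor_nonneg.mpr hdiv)
  have h1 : (k : ℝ) * Δ ≤ t := by
    rw [hkr]
    have := Int.floor_le (t / Δ)
    calc (⌊t / Δ⌋ : ℝ) * Δ ≤ (t / Δ) * Δ := by nlinarith
    _ = t := by field_simp
  have h2 : t - (k : ℝ) * Δ ≤ Δ := by
    rw [hkr]
    have := Int.lt_floor_add_one (t / Δ)
    nlinarith [div_lt_iff₀ hΔ |>.mp this]
  have := (step k (inv k)).1 (t - (k : ℝ) * Δ) (by linarith) h2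
  simpa using this
end

section
/- (Liveness: guaranteed switch back to AC.) Let an RTA instance be given with T_SC shift-closed and property (P2b) holding. Then for every state s ∈ φ_safe and every trajectory τ ∈ T_SC with τ 0 = s, there exists k : ℕ such that τ (k·Δ) ∈ φ_safer; consequently the decision module, which samples the SC-controlled trajectory every Δ time units, eventually observes a state in φ_safer and switches control back to AC. -/
/-- `T` is closed under time shifts. -/
def ShiftClosed {S : Type*} (T : Set (ℝ → S)) : Prop :=
  ∀ τ ∈ T, ∀ c : ℝ, 0 ≤ c → (fun u : ℝ => τ (u + c)) ∈ T

/-- Liveness: under the safe controller, the decision module (sampling every Δ)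
eventually observes a state in φ_safer and can switch control back to AC. -/
theorem liveness_switch_back {S : Type*}
    (Tsc Tstar : Set (ℝ → S)) (hsub : Tsc ⊆ Tstar)
    (Δ : ℝ) (hΔ : 0 < Δ) (φsafe φsafer : Set S)
    (hshift : ShiftClosed Tsc)
    (hP2b : ∀ s ∈ φsafe, ∃ T : ℝ, 0 ≤ T ∧
      ∀ s' ∈ Reach Tsc s T, Reach Tsc s' Δ ⊆ φsafer) :
    ∀ s ∈ φsafe, ∀ τ ∈ Tsc, τ 0 = s → ∃ k : ℕ, τ (k * Δ) ∈ φsafer := by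
  intro s hs τ hτ hτ0
  obtain ⟨T, hT0, hP⟩ := hP2b s hs
  set k : ℕ := ⌊T / Δ⌋₊ with hk
  have hkΔ0 : (0:ℝ) ≤ k * Δ := by positivity
  have hkΔT : (k:ℝ) * Δ ≤ T := by
    rw [← le_div_iff₀ hΔ]
    exact Nat.floor_le (by positivity)
  have hs' : τ (k * Δ) ∈ Reach Tsc s T :=
    ⟨τ, hτ, hτ0, k * Δ, hkΔ0, hkΔT, rfl⟩
  refine ⟨k + 1, hP _ hs' ?_⟩
  refine ⟨fun u => τ (u + k * Δ), hshift τ hτ _ hkΔ0, by simp, Δ, le_of_lt hΔ, le_refl Δ, ?_⟩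
  push_cast
  ring_nf
end
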